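/- Set τ₁(t) = (cosh(2t⁻²) − 1)/sinh(2t⁻²) for t > 0. Then as t → ∞, the functions x ↦ t⁻¹·x·exp(−½·τ₁(t)·x²) − t⁻¹·x·exp(−½·t⁻²·x²) converge to 0 uniformly on ℝ; that is, sup_{x ∈ ℝ} |t⁻¹·x·(exp(−τ₁(t)·x²/2) − exp(−x²/(2t²)))| → 0 as t → ∞. -/

import Mathlib

open Filter

/-- The Mehler parameter `τ₁(t) = (cosh(2t⁻²) − 1)/sinh(2t⁻²)`. -/
noncomputable def tau₁ (t : ℝ) : ℝ :=
  (Real.cosh (2 * (t ^ 2)⁻¹) - 1) / Real.sinh (2 * (t ^ 2)⁻¹)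

/-!
Since `τ₁(t) = tanh (t⁻²)`, the ratio `ρ = τ₁(t) t²` tends to `1`. Substituting `x = t y`, the
function at time `t` becomes `y ↦ y (exp (-ρ y²/2) - exp (-y²/2))`. The mean value bound
`|e⁻ᴬ - e⁻ᴮ| ≤ |A - B| e^{-min A B}` bounds it by `|ρ - 1|/2 · |y|³ exp (-min ρ 1 · y²/2)`, and
`s³ ≤ 6 eˢ` bounds `|y|³ exp (-c y²/2)` by `√(6/c³)`; so the sup norm is at most
`|ρ - 1|/2 · √(6 / (min ρ 1)³) → 0`.
-/

open Real Topology

theorem Real.cosh_two_mul_sub_one_div_sinh_two_mul (u : ℝ) :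
    (cosh (2 * u) - 1) / sinh (2 * u) = tanh u := by
  rw [cosh_two_mul, sinh_two_mul, tanh_eq_sinh_div_cosh]
  rcases eq_or_ne (sinh u) 0 with hs | hs
  · simp [hs]
  have hc : cosh u ≠ 0 := (cosh_pos u).ne'
  field_simp
  linear_combination cosh_sq u

theorem tau₁_eq_tanh (t : ℝ) : tau₁ t = tanh (t ^ 2)⁻¹ :=
  cosh_two_mul_sub_one_div_sinh_two_mul _

theorem Real.tendsto_tanh_div_self : Tendsto (fun u => tanh u / u) (𝓝[≠] 0) (𝓝 1) := by
  have hsinh : Tendsto (fun u => sinh u / u) (𝓝[≠] 0) (𝓝 1) := by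
    simpa [div_eq_inv_mul] using (hasDerivAt_sinh 0).tendsto_slope_zero
  have hcosh : Tendsto (fun u => cosh u) (𝓝[≠] 0) (𝓝 1) := by
    simpa using continuous_cosh.continuousWithinAt.tendsto (x := 0) (s := {0}ᶜ)
  have := hsinh.div hcosh one_ne_zero
  rw [div_one] at this
  refine this.congr fun u => ?_
  simp [tanh_eq_sinh_div_cosh, div_right_comm]

theorem tendsto_tau₁_mul_sq : Tendsto (fun t => tau₁ t * t ^ 2) atTop (𝓝 1) := by
  have hu : Tendsto (fun t : ℝ => (t ^ 2)⁻¹) atTop (𝓝[≠] 0) :=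
    (tendsto_inv_atTop_nhdsGT_zero.comp (tendsto_pow_atTop two_ne_zero)).mono_right
      (nhdsGT_le_nhdsNE 0)
  simpa [Function.comp_def, tau₁_eq_tanh, div_eq_mul_inv] using tendsto_tanh_div_self.comp hu

theorem Real.abs_pow_three_mul_exp_neg_le {c : ℝ} (hc : 0 < c) (y : ℝ) :
    |y| ^ 3 * exp (-(c * y ^ 2) / 2) ≤ √(6 / c ^ 3) := by
  have key : (c * y ^ 2) ^ 3 / 6 ≤ exp (c * y ^ 2) := by
    simpa [Nat.factorial] using pow_div_factorial_le_exp _ (by positivity : 0 ≤ c * y ^ 2) 3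
  rw [← sqrt_sq (by positivity : 0 ≤ |y| ^ 3 * exp (-(c * y ^ 2) / 2))]
  refine sqrt_le_sqrt ?_
  rw [le_div_iff₀ (by positivity)]
  have hE : exp (-(c * y ^ 2) / 2) ^ 2 * exp (c * y ^ 2) = 1 := by
    rw [← exp_nat_mul, ← exp_add]
    ring_nf
    exact exp_zero
  calc (|y| ^ 3 * exp (-(c * y ^ 2) / 2)) ^ 2 * c ^ 3
      = (c * y ^ 2) ^ 3 * exp (-(c * y ^ 2) / 2) ^ 2 := by
        rw [show (|y| ^ 3 * exp (-(c * y ^ 2) / 2)) ^ 2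
          = (|y| ^ 2) ^ 3 * exp (-(c * y ^ 2) / 2) ^ 2 by ring, sq_abs]
        ring
    _ ≤ 6 * exp (c * y ^ 2) * exp (-(c * y ^ 2) / 2) ^ 2 := by gcongr; linarith
    _ = 6 := by rw [mul_assoc, mul_comm (exp _), hE, mul_one]

theorem Real.abs_exp_neg_sub_exp_neg_le (A B : ℝ) :
    |exp (-A) - exp (-B)| ≤ |A - B| * exp (-min A B) := by
  wlog hAB : A ≤ B generalizing A B
  · simpa [abs_sub_comm, min_comm] using this B A (le_of_not_ge hAB)
  have h := add_one_le_exp (A - B)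
  rw [min_eq_left hAB, abs_of_nonneg (sub_nonneg.2 (exp_le_exp.2 (by linarith))),
    abs_of_nonpos (by linarith)]
  have : exp (-B) = exp (-A) * exp (A - B) := by rw [← exp_add]; ring_nf
  nlinarith [exp_pos (-A)]

theorem Real.abs_mul_exp_sub_mul_exp_le {a b : ℝ} (ha : 0 < a) (hb : 0 < b) (y : ℝ) :
    |y * exp (-(a * y ^ 2) / 2) - y * exp (-(b * y ^ 2) / 2)| ≤
      |a - b| / 2 * √(6 / min a b ^ 3) := by
  have hm : 0 < min a b := lt_min ha hb
  have hmin : min (a * y ^ 2 / 2) (b * y ^ 2 / 2) = min a b * y ^ 2 / 2 := by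
    rw [min_div_div_right zero_le_two, min_mul_of_nonneg _ _ (sq_nonneg y)]
  calc |y * exp (-(a * y ^ 2) / 2) - y * exp (-(b * y ^ 2) / 2)|
      = |y| * |exp (-(a * y ^ 2 / 2)) - exp (-(b * y ^ 2 / 2))| := by
        rw [← mul_sub, abs_mul, neg_div, neg_div]
    _ ≤ |y| * (|a * y ^ 2 / 2 - b * y ^ 2 / 2| * exp (-(min a b * y ^ 2 / 2))) := by
        rw [← hmin]
        gcongr
        exact abs_exp_neg_sub_exp_neg_le _ _
    _ = |a - b| / 2 * (|y| ^ 3 * exp (-(min a b * y ^ 2) / 2)) := by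
        rw [← sub_div, ← sub_mul, abs_div, abs_mul, abs_two, abs_of_nonneg (sq_nonneg y), neg_div,
          ← sq_abs y]
        ring
    _ ≤ |a - b| / 2 * √(6 / min a b ^ 3) := by
        gcongr
        exact abs_pow_three_mul_exp_neg_le hm y

/-- As `t → ∞`, `x ↦ t⁻¹ x exp(−½ τ₁(t) x²) − t⁻¹ x exp(−½ t⁻² x²)`
tends to `0` uniformly on `ℝ`. -/
theorem tendstoUniformly_id_exp_tau₁_sub_id_exp :
    TendstoUniformly
      (fun (t : ℝ) (x : ℝ) =>
        t⁻¹ * x * Real.exp (-(tau₁ t * x ^ 2) / 2) -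
          t⁻¹ * x * Real.exp (-((t ^ 2)⁻¹ * x ^ 2) / 2))
      (fun _ => 0) atTop := by
  set g : ℝ → ℝ := fun r => |r - 1| / 2 * √(6 / min r 1 ^ 3)
  have hg : Tendsto (fun t => g (tau₁ t * t ^ 2)) atTop (𝓝 0) := by
    have : ContinuousAt g 1 := by fun_prop (disch := norm_num)
    have hg1 : g 1 = 0 := by simp [g]
    exact hg1 ▸ this.tendsto.comp tendsto_tau₁_mul_sq
  have hbound : ∀ᶠ t in atTop, ∀ x, |t⁻¹ * x * exp (-(tau₁ t * x ^ 2) / 2) -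
      t⁻¹ * x * exp (-((t ^ 2)⁻¹ * x ^ 2) / 2)| ≤ g (tau₁ t * t ^ 2) := by
    filter_upwards [tendsto_tau₁_mul_sq.eventually_const_lt one_pos, eventually_ne_atTop 0]
      with t hρ ht x
    -- the substitution `x = t y`
    convert abs_mul_exp_sub_mul_exp_le hρ one_pos (t⁻¹ * x) using 6 <;> field_simp
  rw [Metric.tendstoUniformly_iff]
  intro ε hε
  filter_upwards [hbound, hg.eventually_lt_const hε] with t hle hlt x
  rw [dist_zero_left, Real.norm_eq_abs]
  exact (hle x).trans_lt hlt
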